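/- Stationarity implies GARE: If (K*, L*) is a stabilizing pair at which both partial gradients of f vanish, i.e., R₁K* - B₁ᵀX*A* = 0 and -R₂L* - B₂ᵀX*A* = 0 where A* = A - B₁K* - B₂L* and X* is the value matrix, and if the block matrix M = [[R₁ + B₁ᵀX*B₁, B₁ᵀX*B₂],[B₂ᵀX*B₁, -R₂ + B₂ᵀX*B₂]] is invertible, then X* is symmetric and satisfies the generalized algebraic Riccati equation AᵀX*A - X* + Q - [B₁ᵀX*A; B₂ᵀX*A]ᵀ M^{-1} [B₁ᵀX*A; B₂ᵀX*A] = 0. -/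

import Mathlib

/-!
By Gelfand's formula a Schur-stable `A*` has `A*ᵏ → 0`, so the only solution of the Stein
equation `A*ᵀ D A* = D` is `D = 0`. Transposing the value equation shows that `X* - X*ᵀ` solves
it, hence `X*` is symmetric. The two stationarity conditions say exactly that `[K*; L*]` solves
`M [K*; L*] = [B₁ᵀX*A; B₂ᵀX*A]`, so the quadratic term of the GARE equals
`AᵀX*(B₁K* + B₂L*)`, and the GARE reduces to `AᵀX*A* + Q = X*`. Writing `A = A* + B₁K* + B₂L*`
and using the stationarity conditions once more, this is the value equation.
-/

open Matrix Filter Topology NNReal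

/-- A real square matrix is Schur stable if every complex eigenvalue has modulus `< 1`. -/
def IsSchur {n : ℕ} (M : Matrix (Fin n) (Fin n) ℝ) : Prop :=
  ∀ μ ∈ spectrum ℂ (M.map Complex.ofReal), ‖μ‖ < 1

theorem tendsto_pow_atTop_nhds_zero_of_forall_norm_lt_one {A : Type*} [NormedRing A]
    [NormedAlgebra ℂ A] [CompleteSpace A] {a : A} (ha : ∀ z ∈ spectrum ℂ a, ‖z‖ < 1) :
    Tendsto (a ^ ·) atTop (𝓝 0) := by
  rcases subsingleton_or_nontrivial A with _ | _
  · simp [Subsingleton.elim _ (0 : A)]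
  obtain ⟨r, hr_gt, hr_lt_one⟩ : ∃ r : ℝ≥0, spectralRadius ℂ a < r ∧ r < 1 :=
    (ENNReal.lt_iff_exists_nnreal_btwn.mp <| by
      simpa using spectrum.spectralRadius_lt_of_forall_lt a (r := 1) fun z hz => ha z hz).imp
      fun _ ⟨h₁, h₂⟩ => ⟨h₁, ENNReal.coe_lt_one_iff.mp h₂⟩
  have hbound : ∀ᶠ k in atTop, ‖a ^ k‖ ≤ (r : ℝ) ^ k := by
    filter_upwards
      [(spectrum.pow_norm_pow_one_div_tendsto_nhds_spectralRadius a).eventually_lt_const hr_gt,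
        eventually_ne_atTop 0] with k hk hk0
    rw [← ENNReal.ofReal_coe_nnreal, ENNReal.ofReal_lt_ofReal_iff_of_nonneg (by positivity)] at hk
    calc ‖a ^ k‖ = (‖a ^ k‖ ^ (1 / k : ℝ)) ^ k := by
          rw [one_div, Real.rpow_inv_natCast_pow (norm_nonneg _) hk0]
      _ ≤ (r : ℝ) ^ k := pow_le_pow_left₀ (by positivity) hk.le k
  exact squeeze_zero_norm' hbound (tendsto_pow_atTop_nhds_zero_of_lt_one r.coe_nonneg hr_lt_one)

theorem eq_zero_of_mul_mul_eq_self {R : Type*} [MonoidWithZero R] [TopologicalSpace R]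
    [ContinuousMul R] [T2Space R] {a b d : R} (ha : Tendsto (a ^ ·) atTop (𝓝 0))
    (hb : Tendsto (b ^ ·) atTop (𝓝 0)) (h : b * d * a = d) : d = 0 := by
  have hpow (k : ℕ) : b ^ k * d * a ^ k = d := by
    induction k with
    | zero => simp
    | succ k ih =>
      calc b ^ (k + 1) * d * a ^ (k + 1) = b * (b ^ k * d * a ^ k) * a := by
            simp only [pow_succ' b, pow_succ a, mul_assoc]
        _ = d := by rw [ih, h]
  have hlim := (hb.mul_const d).mul ha
  simp only [hpow, zero_mul] at hlim
  exact tendsto_nhds_unique tendsto_const_nhds hlim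

section IsSchur

variable {n : ℕ} {A : Matrix (Fin n) (Fin n) ℝ}

section

attribute [local instance] Matrix.linftyOpNormedRing Matrix.linftyOpNormedAlgebra

theorem IsSchur.tendsto_pow (hA : IsSchur A) : Tendsto (A ^ ·) atTop (𝓝 0) := by
  have hre := ((continuous_id.matrix_map Complex.continuous_re).tendsto 0).comp
    (tendsto_pow_atTop_nhds_zero_of_forall_norm_lt_one hA)
  have hpow (k : ℕ) : (A.map Complex.ofReal ^ k).map Complex.re = A ^ k := by
    change (Complex.ofRealHom.mapMatrix A ^ k).map Complex.re = A ^ k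
    rw [← map_pow, RingHom.mapMatrix_apply, Matrix.map_map]
    ext
    simp
  simpa [Function.comp_def, hpow] using hre

end

theorem IsSchur.eq_zero_of_transpose_mul_mul_eq_self (hA : IsSchur A)
    {D : Matrix (Fin n) (Fin n) ℝ} (h : Aᵀ * D * A = D) : D = 0 :=
  eq_zero_of_mul_mul_eq_self hA.tendsto_pow
    (by simpa [Function.comp_def, Matrix.transpose_pow] using
      (continuous_id.matrix_transpose.tendsto 0).comp hA.tendsto_pow) h

theorem IsSchur.isSymm_of_transpose_mul_mul_add_eq_self (hA : IsSchur A)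
    {X P : Matrix (Fin n) (Fin n) ℝ} (hP : P.IsSymm) (h : Aᵀ * X * A + P = X) : X.IsSymm := by
  have hT : Aᵀ * Xᵀ * A + P = Xᵀ := by
    simpa only [transpose_add, transpose_mul, transpose_transpose, hP.eq, Matrix.mul_assoc]
      using congrArg transpose h
  have hstein : Aᵀ * (Xᵀ - X) * A = Xᵀ - X := by
    rw [Matrix.mul_sub, Matrix.sub_mul, eq_sub_of_add_eq hT, eq_sub_of_add_eq h,
      sub_sub_sub_cancel_right]
  exact sub_eq_zero.mp (hA.eq_zero_of_transpose_mul_mul_eq_self hstein)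

end IsSchur

namespace Matrix

variable {α ι κ₁ κ₂ : Type*} [CommRing α] [Fintype ι] [Fintype κ₁] [Fintype κ₂]

omit [Fintype ι] in
theorem IsSymm.transpose_mul_mul {R : Matrix κ₁ κ₁ α} (hR : R.IsSymm) (K : Matrix κ₁ ι α) :
    (Kᵀ * R * K).IsSymm := by
  simp only [IsSymm, transpose_mul, transpose_transpose, hR.eq, Matrix.mul_assoc]

variable {A X Q : Matrix ι ι α} {B₁ : Matrix ι κ₁ α} {B₂ : Matrix ι κ₂ α}
  {R₁ : Matrix κ₁ κ₁ α} {R₂ : Matrix κ₂ κ₂ α} {K : Matrix κ₁ ι α} {L : Matrix κ₂ ι α}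

theorem fromBlocks_mul_fromRows_of_gradient_eq_zero
    (hK : R₁ * K - B₁ᵀ * X * (A - B₁ * K - B₂ * L) = 0)
    (hL : -(R₂ * L) - B₂ᵀ * X * (A - B₁ * K - B₂ * L) = 0) :
    fromBlocks (R₁ + B₁ᵀ * X * B₁) (B₁ᵀ * X * B₂) (B₂ᵀ * X * B₁) (-R₂ + B₂ᵀ * X * B₂)
        * fromRows K L = fromRows (B₁ᵀ * X * A) (B₂ᵀ * X * A) := by
  rw [fromBlocks_mul_fromRows, Matrix.add_mul, Matrix.add_mul, sub_eq_zero.mp hK,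
    Matrix.neg_mul, sub_eq_zero.mp hL]
  simp only [Matrix.mul_sub, Matrix.mul_assoc]
  congr 1 <;> abel

theorem transpose_mul_mul_sub_add_eq_zero_of_gradient_eq_zero
    (hX : (A - B₁ * K - B₂ * L)ᵀ * X * (A - B₁ * K - B₂ * L) + Q + Kᵀ * R₁ * K
      - Lᵀ * R₂ * L = X)
    (hK : R₁ * K - B₁ᵀ * X * (A - B₁ * K - B₂ * L) = 0)
    (hL : -(R₂ * L) - B₂ᵀ * X * (A - B₁ * K - B₂ * L) = 0) :
    Aᵀ * X * (A - B₁ * K - B₂ * L) - X + Q = 0 := by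
  set Acl := A - B₁ * K - B₂ * L
  have hA : A = Acl + B₁ * K + B₂ * L := by simp only [Acl]; abel
  calc Aᵀ * X * Acl - X + Q
      = Aclᵀ * X * Acl + Kᵀ * (B₁ᵀ * X * Acl) + Lᵀ * (B₂ᵀ * X * Acl) - X + Q := by
        conv_lhs => rw [hA]
        simp only [transpose_add, transpose_mul, Matrix.add_mul, Matrix.mul_assoc]
    _ = Aclᵀ * X * Acl + Q + Kᵀ * R₁ * K - Lᵀ * R₂ * L - X := by
        rw [← sub_eq_zero.mp hK, ← sub_eq_zero.mp hL]
        simp only [Matrix.mul_neg, Matrix.mul_assoc]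
        abel
    _ = 0 := by rw [hX, sub_self]

end Matrix

/-- Stationarity implies the GARE: if both partial gradients of `f` vanish at a
stabilizing pair `(K*, L*)` and the block matrix `M` is invertible, then the
value matrix `X*` is symmetric and satisfies the generalized algebraic Riccati
equation. -/
theorem stationarity_implies_gare {n m₁ m₂ : ℕ}
    (A : Matrix (Fin n) (Fin n) ℝ) (B₁ : Matrix (Fin n) (Fin m₁) ℝ)
    (B₂ : Matrix (Fin n) (Fin m₂) ℝ) (Q : Matrix (Fin n) (Fin n) ℝ)
    (R₁ : Matrix (Fin m₁) (Fin m₁) ℝ) (R₂ : Matrix (Fin m₂) (Fin m₂) ℝ)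
    (Kstar : Matrix (Fin m₁) (Fin n) ℝ) (Lstar : Matrix (Fin m₂) (Fin n) ℝ)
    (Xstar : Matrix (Fin n) (Fin n) ℝ)
    (M : Matrix (Fin m₁ ⊕ Fin m₂) (Fin m₁ ⊕ Fin m₂) ℝ)
    (hQ : Q.IsSymm) (hR₁ : R₁.PosDef) (hR₂ : R₂.PosDef)
    (hstab : IsSchur (A - B₁ * Kstar - B₂ * Lstar))
    (hX : (A - B₁ * Kstar - B₂ * Lstar)ᵀ * Xstar * (A - B₁ * Kstar - B₂ * Lstar)
            + Q + Kstarᵀ * R₁ * Kstar - Lstarᵀ * R₂ * Lstar = Xstar)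
    (hgradK : R₁ * Kstar - B₁ᵀ * Xstar * (A - B₁ * Kstar - B₂ * Lstar) = 0)
    (hgradL : -(R₂ * Lstar) - B₂ᵀ * Xstar * (A - B₁ * Kstar - B₂ * Lstar) = 0)
    (hM : M = Matrix.fromBlocks (R₁ + B₁ᵀ * Xstar * B₁) (B₁ᵀ * Xstar * B₂)
            (B₂ᵀ * Xstar * B₁) (-R₂ + B₂ᵀ * Xstar * B₂))
    (hMinv : IsUnit M) :
    Xstar.IsSymm ∧
    Aᵀ * Xstar * A - Xstar + Q
      - (Matrix.fromRows (B₁ᵀ * Xstar * A) (B₂ᵀ * Xstar * A))ᵀ * M⁻¹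
          * Matrix.fromRows (B₁ᵀ * Xstar * A) (B₂ᵀ * Xstar * A) = 0 := by
  have hR₁symm : R₁.IsSymm := (conjTranspose_eq_transpose_of_trivial R₁).symm.trans hR₁.1
  have hR₂symm : R₂.IsSymm := (conjTranspose_eq_transpose_of_trivial R₂).symm.trans hR₂.1
  have hXsymm : Xstar.IsSymm :=
    hstab.isSymm_of_transpose_mul_mul_add_eq_self
      ((hQ.add (hR₁symm.transpose_mul_mul Kstar)).sub (hR₂symm.transpose_mul_mul Lstar))
      (by rw [← add_sub_assoc, ← add_assoc]; exact hX)
  have hgain : M⁻¹ * fromRows (B₁ᵀ * Xstar * A) (B₂ᵀ * Xstar * A) = fromRows Kstar Lstar := by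
    rw [← fromBlocks_mul_fromRows_of_gradient_eq_zero hgradK hgradL, ← hM,
      nonsing_inv_mul_cancel_left _ _ ((isUnit_iff_isUnit_det M).mp hMinv)]
  refine ⟨hXsymm, ?_⟩
  rw [Matrix.mul_assoc _ M⁻¹, hgain, transpose_fromRows, fromCols_mul_fromRows,
    ← transpose_mul_mul_sub_add_eq_zero_of_gradient_eq_zero hX hgradK hgradL]
  simp only [transpose_mul, transpose_transpose, hXsymm.eq, Matrix.mul_sub, Matrix.mul_assoc]
  abel
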